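/- arXiv:2407.14618 — 2 statements merged into one kernel-verified Lean document; each statement's English description precedes it below -/
import Mathlib

section
/- Let σ ∈ ℝ^n with 0 ≤ σ_1 ≤ ... ≤ σ_n and Σ σ_i = 1, and suppose each ℓ_i : ℝ^d → ℝ is G-Lipschitz. Then the spectral risk R_σ(w) = Σ_i σ_i ℓ_{[i]}(w) is G-Lipschitz. -/
/-- If each loss `ℓ i` is `G`-Lipschitz, then the spectral risk
`R_σ(w) = ∑ i, σ i * ℓ_{[i]}(w)` is `G`-Lipschitz, when `0 ≤ σ_1 ≤ ... ≤ σ_n`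
and `∑ σ i = 1`. -/
theorem spectral_risk_lipschitz (n d : ℕ) (σ : Fin n → ℝ)
    (hσ0 : ∀ i, 0 ≤ σ i) (hσmono : Monotone σ) (hσsum : ∑ i, σ i = 1)
    (G : ℝ) (hG : 0 ≤ G)
    (ℓ : Fin n → EuclideanSpace ℝ (Fin d) → ℝ)
    (hlip : ∀ i, ∀ x y, |ℓ i x - ℓ i y| ≤ G * ‖x - y‖)
    (R : EuclideanSpace ℝ (Fin d) → ℝ)
    (hR : ∀ w, ∃ π : Equiv.Perm (Fin n),
      Monotone (fun i => ℓ (π i) w) ∧ R w = ∑ i, σ i * ℓ (π i) w) :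
    ∀ x y, |R x - R y| ≤ G * ‖x - y‖ := by
  have key : ∀ x y, R x - R y ≤ G * ‖x - y‖ := by
    intro x y
    obtain ⟨πx, _, hx⟩ := hR x
    obtain ⟨πy, hmono, hy⟩ := hR y
    set g : Fin n → ℝ := fun i => ℓ (πy i) y with hg
    have hmv : Monovary σ g := fun i j hij => hσmono (hmono.reflect_lt hij).le
    have h1 : ∑ i, σ i * ℓ (πx i) y ≤ R y := by
      have := hmv.sum_mul_comp_perm_le_sum_mul (σ := πy⁻¹ * πx)
      simpa [hg, hy] using this
    have h2 : R x - R y ≤ ∑ i, σ i * (ℓ (πx i) x - ℓ (πx i) y) := by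
      rw [hx]
      have : ∑ i, σ i * (ℓ (πx i) x - ℓ (πx i) y)
          = ∑ i, σ i * ℓ (πx i) x - ∑ i, σ i * ℓ (πx i) y := by
        rw [← Finset.sum_sub_distrib]; ring_nf
      rw [this]
      linarith
    have h3 : ∑ i, σ i * (ℓ (πx i) x - ℓ (πx i) y) ≤ ∑ i, σ i * (G * ‖x - y‖) := by
      apply Finset.sum_le_sum
      intro i _
      exact mul_le_mul_of_nonneg_left
        ((le_abs_self _).trans (hlip (πx i) x y)) (hσ0 i)
    have h4 : ∑ i, σ i * (G * ‖x - y‖) = G * ‖x - y‖ := by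
      rw [← Finset.sum_mul, hσsum, one_mul]
    linarith
  intro x y
  rw [abs_sub_le_iff]
  constructor
  · exact key x y
  · have := key y x
    rwa [norm_sub_rev] at this
end

section
/- Let g : ℝ^d → ℝ be μ-strongly convex with μ ≥ 0, λ > 0, x̂ ∈ ℝ^d, and let x̄ satisfy g(x̄) + (λ/2)‖x̄ − x̂‖² ≤ min_x {g(x) + (λ/2)‖x − x̂‖²} + ε. Then for every x ∈ ℝ^d: g(x̄) − g(x) ≤ (λ/2)[‖x − x̂‖² − ‖x − x̄‖² − ‖x̂ − x̄‖²] − (μ/2)‖x − x̄‖² + √((λ+μ)ε/2)·‖x̄ − x‖² + √((λ+μ)ε/2) + ε. -/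
/-!
`F y = g y + λ/2 ‖y - x̂‖²` is `(λ + μ)`-strongly convex and `x̄` minimizes it up to `ε`.
Comparing `F x̄` with `F` at `x̄ + t (x - x̄)`, `t ∈ (0, 1]`, gives
`F x̄ - F x ≤ ε / t - (λ + μ)/2 (1 - t) ‖x - x̄‖²`, which rearranges to the three-point
inequality with error `(λ + μ)/2 · t ‖x - x̄‖² + ε / t`; balancing the two terms,
`t ≈ √(2ε / (λ + μ))`, gives the `√((λ + μ) ε / 2)` error terms.
-/

open Set Filter Topology

section StrongConvex

variable {E : Type*} [NormedAddCommGroup E] [NormedSpace ℝ E] {s : Set E} {f g : E → ℝ} {m n : ℝ}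

lemma StrongConvexOn.add (hf : StrongConvexOn s m f) (hg : StrongConvexOn s n g) :
    StrongConvexOn s (m + n) (f + g) := by
  unfold StrongConvexOn
  convert UniformConvexOn.add hf hg using 1
  funext r
  simp only [Pi.add_apply]
  ring

lemma StrongConvexOn.sub_le_of_forall_le_add {x xbar : E} {ε t : ℝ} (hf : StrongConvexOn s m f)
    (hx : x ∈ s) (hxbar : xbar ∈ s) (hmin : ∀ y ∈ s, f xbar ≤ f y + ε)
    (ht₀ : 0 < t) (ht₁ : t ≤ 1) :
    f xbar - f x ≤ ε / t - m / 2 * (1 - t) * ‖x - xbar‖ ^ 2 := by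
  have hseg := hf.2 hx hxbar ht₀.le (sub_nonneg.2 ht₁) (add_sub_cancel t 1)
  have hy := hmin _ (hf.1 hx hxbar ht₀.le (sub_nonneg.2 ht₁) (add_sub_cancel t 1))
  simp only [smul_eq_mul] at hseg
  rw [le_sub_iff_add_le, le_div_iff₀ ht₀]
  nlinarith

end StrongConvex

section InnerProductSpace

variable {E : Type*} [NormedAddCommGroup E] [InnerProductSpace ℝ E] {s : Set E}

lemma strongConvexOn_mul_norm_sub_sq (hs : Convex ℝ s) (m : ℝ) (a : E) :
    StrongConvexOn s m fun y ↦ m / 2 * ‖y - a‖ ^ 2 := by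
  refine strongConvexOn_iff_convex.2 ⟨hs, fun x _ y _ p q hp hq hpq ↦ ?_⟩
  simp only [norm_sub_sq_real, inner_add_left, real_inner_smul_left, smul_eq_mul]
  obtain rfl := eq_sub_of_add_eq hpq
  exact le_of_eq (by ring)

end InnerProductSpace

/-- Take `t = 1` if `c ≤ ε`, `t = √ε / √c` if `0 < ε ≤ c`, and let `t → 0⁺` if `ε = 0`. -/
lemma le_sqrt_mul_add_of_forall_le {A c D ε : ℝ} (hc : 0 ≤ c) (hD : 0 ≤ D) (hε : 0 ≤ ε)
    (h : ∀ t, 0 < t → t ≤ 1 → A ≤ c * t * D + ε / t) :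
    A ≤ √(c * ε) * D + √(c * ε) + ε := by
  rcases le_total c ε with hcε | hεc
  · have hc_le : c ≤ √(c * ε) :=
      (Real.le_sqrt hc (by positivity)).2 (by nlinarith)
    have hA := h 1 one_pos le_rfl
    rw [mul_one, div_one] at hA
    nlinarith [Real.sqrt_nonneg (c * ε)]
  rcases hε.eq_or_lt with rfl | hε₀
  · have hlim : Tendsto (fun t ↦ c * t * D + 0 / t) (𝓝[>] 0) (𝓝 0) := by
      simp only [zero_div, add_zero]
      have : Continuous fun t ↦ c * t * D := by fun_prop
      simpa using (this.tendsto 0).mono_left nhdsWithin_le_nhds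
    simp only [mul_zero, Real.sqrt_zero, zero_mul, add_zero]
    refine ge_of_tendsto hlim ?_
    filter_upwards [Ioo_mem_nhdsGT one_pos] with t ht using h t ht.1 ht.2.le
  · have hc₀ : 0 < c := hε₀.trans_le hεc
    have hsc : 0 < √c := Real.sqrt_pos.2 hc₀
    have hsε : 0 < √ε := Real.sqrt_pos.2 hε₀
    have hA := h (√ε / √c) (div_pos hsε hsc) ((div_le_one hsc).2 (Real.sqrt_le_sqrt hεc))
    have hct : c * (√ε / √c) = √(c * ε) := by
      rw [Real.sqrt_mul hc]; field_simp; exact (Real.sq_sqrt hc).symm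
    have hεt : ε / (√ε / √c) = √(c * ε) := by
      rw [Real.sqrt_mul hc]; field_simp; exact (Real.sq_sqrt hε).symm
    rw [hct, hεt] at hA
    linarith [Real.sqrt_nonneg (c * ε)]

/-- Deterministic version of the auxiliary lemma (Lemma A.1): an ε-approximate
proximal point `x̄` of a μ-strongly convex `g` satisfies a perturbed three-point
descent inequality. -/
theorem approx_prox_three_point (d : ℕ) (g : EuclideanSpace ℝ (Fin d) → ℝ)
    (μ : ℝ) (hμ : 0 ≤ μ)
    (hg : ConvexOn ℝ Set.univ (fun x => g x - μ / 2 * ‖x‖ ^ 2))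
    (lam : ℝ) (hlam : 0 < lam) (xhat xbar : EuclideanSpace ℝ (Fin d))
    (ε : ℝ) (hε : 0 ≤ ε)
    (hbar : ∀ x, g xbar + lam / 2 * ‖xbar - xhat‖ ^ 2 ≤
      g x + lam / 2 * ‖x - xhat‖ ^ 2 + ε) :
    ∀ x, g xbar - g x ≤
      lam / 2 * (‖x - xhat‖ ^ 2 - ‖x - xbar‖ ^ 2 - ‖xhat - xbar‖ ^ 2)
        - μ / 2 * ‖x - xbar‖ ^ 2
        + Real.sqrt ((lam + μ) * ε / 2) * ‖xbar - x‖ ^ 2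
        + Real.sqrt ((lam + μ) * ε / 2) + ε := by
  intro x
  have hF : StrongConvexOn univ (μ + lam) fun y ↦ g y + lam / 2 * ‖y - xhat‖ ^ 2 :=
    (strongConvexOn_iff_convex.2 hg).add (strongConvexOn_mul_norm_sub_sq convex_univ lam xhat)
  have hstep : ∀ t, 0 < t → t ≤ 1 →
      g xbar - g x - (lam / 2 * (‖x - xhat‖ ^ 2 - ‖x - xbar‖ ^ 2 - ‖xhat - xbar‖ ^ 2)
        - μ / 2 * ‖x - xbar‖ ^ 2) ≤ (lam + μ) / 2 * t * ‖xbar - x‖ ^ 2 + ε / t := by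
    intro t ht₀ ht₁
    have hF_step :=
      hF.sub_le_of_forall_le_add (mem_univ x) (mem_univ xbar) (fun y _ ↦ hbar y) ht₀ ht₁
    rw [norm_sub_rev xhat xbar, norm_sub_rev xbar x]
    linarith
  have hbound := le_sqrt_mul_add_of_forall_le (by positivity) (sq_nonneg _) hε hstep
  rw [show (lam + μ) * ε / 2 = (lam + μ) / 2 * ε by ring]
  linarith
end
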